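/- Fix δ > 0 and X, Z ∈ ℝ^{n₁×n₂}. Then F_sp,δ(Z) ≤ F_sp,δ(X) + ⟨∇F_sp,δ(X), Z − X⟩ + (1/2)⟨Z − X, W_X^{sp}·(Z − X)⟩, where F_sp,δ(X) = Σ_i f_δ(‖X_{i,:}‖₂) with f_δ(t) = t²/2 for |t| ≤ δ and f_δ(t) = (δ²/2)log(e t²/δ²) otherwise, ∇F_sp,δ(X) has i-th row (δ²/max(‖X_{i,:}‖₂², δ²))·X_{i,:}, and W_X^{sp} = diag(max(‖X_{i,:}‖₂²/δ², 1)^{−1}). -/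
import Mathlib


/-- The smoothed-logarithm function `f_δ`. -/
noncomputable def fSmooth (δ t : ℝ) : ℝ :=
  if |t| ≤ δ then t ^ 2 / 2 else (δ ^ 2 / 2) * Real.log (Real.exp 1 * t ^ 2 / δ ^ 2)

/-- The ℓ₂-norm of the i-th row of a matrix. -/
noncomputable def rowNorm {n₁ n₂ : ℕ} (X : Matrix (Fin n₁) (Fin n₂) ℝ) (i : Fin n₁) : ℝ :=
  Real.sqrt (∑ j, (X i j) ^ 2)

lemma fSmooth_majorize (δ x z : ℝ) (hδ : 0 < δ) (hx : 0 ≤ x) (hz : 0 ≤ z) :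
    fSmooth δ z ≤ fSmooth δ x + δ ^ 2 / (2 * max (x ^ 2) (δ ^ 2)) * (z ^ 2 - x ^ 2) := by
  have hδ2 : (0:ℝ) < δ ^ 2 := by positivity
  unfold fSmooth
  rw [abs_of_nonneg hz, abs_of_nonneg hx]
  split_ifs with h1 h2 h2
  · -- z ≤ δ, x ≤ δ
    have hx2 : x ^ 2 ≤ δ ^ 2 := by nlinarith
    rw [max_eq_right hx2]
    have : δ ^ 2 / (2 * δ ^ 2) = 1 / 2 := by
      rw [div_eq_div_iff (by positivity) (by positivity)]; ring
    rw [this]; ring_nf; linarith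
  · -- z ≤ δ, δ < x
    have hxδ : δ < x := lt_of_not_ge h2
    have hxpos : 0 < x := lt_trans hδ hxδ
    have hx2 : δ ^ 2 < x ^ 2 := by nlinarith
    rw [max_eq_left hx2.le]
    have hlog : Real.log (Real.exp 1 * x ^ 2 / δ ^ 2) = 1 + Real.log (x ^ 2 / δ ^ 2) := by
      rw [mul_div_assoc, Real.log_mul (Real.exp_ne_zero 1) (by positivity), Real.log_exp]
    have hkey : 1 - δ ^ 2 / x ^ 2 ≤ Real.log (x ^ 2 / δ ^ 2) := by
      have h := Real.log_le_sub_one_of_pos (show (0:ℝ) < δ ^ 2 / x ^ 2 by positivity)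
      have heq : Real.log (δ ^ 2 / x ^ 2) = - Real.log (x ^ 2 / δ ^ 2) := by
        rw [Real.log_div (by positivity) (by positivity),
          Real.log_div (by positivity) (by positivity)]; ring
      rw [heq] at h; linarith
    have hz2 : z ^ 2 ≤ δ ^ 2 := by nlinarith
    rw [hlog]
    have hA : δ ^ 2 / 2 * (1 + (1 - δ ^ 2 / x ^ 2))
        ≤ δ ^ 2 / 2 * (1 + Real.log (x ^ 2 / δ ^ 2)) :=
      mul_le_mul_of_nonneg_left (by linarith) (by positivity)
    have h5 : 0 ≤ (δ ^ 2 - z ^ 2) * (x ^ 2 - δ ^ 2) := mul_nonneg (by linarith) (by linarith)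
    have heq2 : z ^ 2 / 2 - (δ ^ 2 / 2 * (1 + (1 - δ ^ 2 / x ^ 2))
          + δ ^ 2 / (2 * x ^ 2) * (z ^ 2 - x ^ 2))
        = -((δ ^ 2 - z ^ 2) * (x ^ 2 - δ ^ 2)) / (2 * x ^ 2) := by
      field_simp <;> ring
    have h6 : 0 ≤ (δ ^ 2 - z ^ 2) * (x ^ 2 - δ ^ 2) / (2 * x ^ 2) :=
      div_nonneg h5 (by positivity)
    rw [neg_div] at heq2
    linarith
  · -- δ < z, x ≤ δ
    have hzδ : δ < z := lt_of_not_ge h1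
    have hzpos : 0 < z := lt_trans hδ hzδ
    have hx2 : x ^ 2 ≤ δ ^ 2 := by nlinarith
    rw [max_eq_right hx2]
    have hlog : Real.log (Real.exp 1 * z ^ 2 / δ ^ 2) = 1 + Real.log (z ^ 2 / δ ^ 2) := by
      rw [mul_div_assoc, Real.log_mul (Real.exp_ne_zero 1) (by positivity), Real.log_exp]
    have hkey : Real.log (z ^ 2 / δ ^ 2) ≤ z ^ 2 / δ ^ 2 - 1 :=
      Real.log_le_sub_one_of_pos (by positivity)
    rw [hlog]
    have hd : δ ^ 2 / (2 * δ ^ 2) = 1 / 2 := by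
      rw [div_eq_div_iff (by positivity) (by positivity)]; ring
    rw [hd]
    have hA : δ ^ 2 / 2 * (1 + Real.log (z ^ 2 / δ ^ 2)) ≤ δ ^ 2 / 2 * (z ^ 2 / δ ^ 2) :=
      mul_le_mul_of_nonneg_left (by linarith) (by positivity)
    have hB : δ ^ 2 / 2 * (z ^ 2 / δ ^ 2) = z ^ 2 / 2 := by field_simp <;> ring
    linarith [hA, hB ▸ hA]
  · -- δ < z, δ < x
    have hxδ : δ < x := lt_of_not_ge h2
    have hzδ : δ < z := lt_of_not_ge h1
    have hxpos : 0 < x := lt_trans hδ hxδ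
    have hzpos : 0 < z := lt_trans hδ hzδ
    have hx2 : δ ^ 2 < x ^ 2 := by nlinarith
    rw [max_eq_left hx2.le]
    have hlogdiff : Real.log (Real.exp 1 * z ^ 2 / δ ^ 2)
        - Real.log (Real.exp 1 * x ^ 2 / δ ^ 2) = Real.log (z ^ 2 / x ^ 2) := by
      rw [Real.log_div (by positivity) (by positivity),
        Real.log_div (by positivity) (by positivity),
        Real.log_mul (Real.exp_ne_zero 1) (by positivity),
        Real.log_mul (Real.exp_ne_zero 1) (by positivity),
        Real.log_div (by positivity) (by positivity)]
      ring
    have hkey : Real.log (z ^ 2 / x ^ 2) ≤ z ^ 2 / x ^ 2 - 1 :=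
      Real.log_le_sub_one_of_pos (by positivity)
    have h4 : Real.log (Real.exp 1 * z ^ 2 / δ ^ 2)
        ≤ Real.log (Real.exp 1 * x ^ 2 / δ ^ 2) + (z ^ 2 / x ^ 2 - 1) := by
      linarith [hlogdiff ▸ hkey]
    have h5 := mul_le_mul_of_nonneg_left h4 (le_of_lt (half_pos hδ2))
    rw [mul_add] at h5
    have h3 : δ ^ 2 / (2 * x ^ 2) * (z ^ 2 - x ^ 2)
        = δ ^ 2 / 2 * (z ^ 2 / x ^ 2 - 1) := by field_simp <;> ring
    rw [h3]
    linarith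
  
/-- global quadratic majorization of the smoothed row-sparsity objective
`F_{sp,δ}(X) = Σ_i f_δ(‖X_{i,:}‖₂)` by the IRLS quadratic model: for all `X, Z`,
`F_{sp,δ}(Z) ≤ F_{sp,δ}(X) + ⟨∇F_{sp,δ}(X), Z − X⟩ + (1/2)⟨Z − X, W_X^{sp}(Z − X)⟩`. -/
theorem Fsp_quadratic_majorization {n₁ n₂ : ℕ} (δ : ℝ) (hδ : 0 < δ)
    (X Z : Matrix (Fin n₁) (Fin n₂) ℝ) :
    ∑ i, fSmooth δ (rowNorm Z i) ≤
      ∑ i, fSmooth δ (rowNorm X i)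
        + ∑ i, (δ ^ 2 / max ((rowNorm X i) ^ 2) (δ ^ 2)) * (∑ j, X i j * (Z i j - X i j))
        + (1 / 2) * ∑ i, (max ((rowNorm X i) ^ 2 / δ ^ 2) 1)⁻¹ * (∑ j, (Z i j - X i j) ^ 2) := by
  have hδ2 : (0:ℝ) < δ ^ 2 := by positivity
  rw [Finset.mul_sum, ← Finset.sum_add_distrib, ← Finset.sum_add_distrib]
  apply Finset.sum_le_sum
  intro i _
  set x := rowNorm X i with hxdef
  set z := rowNorm Z i with hzdef
  have hx : 0 ≤ x := Real.sqrt_nonneg _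
  have hz : 0 ≤ z := Real.sqrt_nonneg _
  have hxs : x ^ 2 = ∑ j, (X i j) ^ 2 := by
    rw [hxdef, rowNorm, Real.sq_sqrt (Finset.sum_nonneg fun j _ => sq_nonneg _)]
  have hzs : z ^ 2 = ∑ j, (Z i j) ^ 2 := by
    rw [hzdef, rowNorm, Real.sq_sqrt (Finset.sum_nonneg fun j _ => sq_nonneg _)]
  have hM : (0:ℝ) < max (x ^ 2) (δ ^ 2) := lt_max_of_lt_right hδ2
  have hdecomp : z ^ 2 - x ^ 2
      = 2 * (∑ j, X i j * (Z i j - X i j)) + ∑ j, (Z i j - X i j) ^ 2 := by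
    rw [hxs, hzs, Finset.mul_sum, ← Finset.sum_add_distrib, ← Finset.sum_sub_distrib]
    exact Finset.sum_congr rfl fun j _ => by ring
  have key := fSmooth_majorize δ x z hδ hx hz
  rw [hdecomp] at key
  have hinv : (max (x ^ 2 / δ ^ 2) 1)⁻¹ = δ ^ 2 / max (x ^ 2) (δ ^ 2) := by
    have hmaxdiv : max (x ^ 2 / δ ^ 2) 1 = max (x ^ 2) (δ ^ 2) / δ ^ 2 := by
      rw [eq_div_iff (ne_of_gt hδ2), max_mul_of_nonneg _ _ (le_of_lt hδ2),
        div_mul_cancel₀ _ (ne_of_gt hδ2), one_mul]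
    rw [hmaxdiv, inv_div]
  rw [hinv]
  have hrw : δ ^ 2 / (2 * max (x ^ 2) (δ ^ 2))
      * (2 * (∑ j, X i j * (Z i j - X i j)) + ∑ j, (Z i j - X i j) ^ 2)
      = δ ^ 2 / max (x ^ 2) (δ ^ 2) * (∑ j, X i j * (Z i j - X i j))
        + 1 / 2 * (δ ^ 2 / max (x ^ 2) (δ ^ 2) * ∑ j, (Z i j - X i j) ^ 2) := by
    field_simp <;> ring
  rw [hrw] at key
  linarith
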